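/- arXiv:2311.11719 — 2 statements merged into one kernel-verified Lean document; each statement's English description precedes it below -/
import Mathlib

section
/- For every x ∈ ℚ_p, x = Σ_{n=0}^∞ ⌊ε(σ^n(x))⌋_p · ∏_{m=0}^n (σ^m(x)/ε(σ^m(x))), i.e., the shift map σ recovers the p-adic digit expansion of x. -/
open scoped Classical in
noncomputable def eps {p : ℕ} [Fact p.Prime] (x : ℚ_[p]) : ℚ_[p] :=
  if x = 0 then 1 else (p : ℚ_[p]) ^ (-x.valuation) * x

noncomputable def fdigit {p : ℕ} [Fact p.Prime] (x : ℚ_[p]) : ℕ :=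
  if h : ‖x‖ ≤ 1 then ((PadicInt.toZMod (⟨x, h⟩ : ℤ_[p])).val) else 0

noncomputable def tau {p : ℕ} [Fact p.Prime] (x : ℚ_[p]) : ℚ_[p] :=
  1 / eps x - (fdigit (1 / eps x) : ℚ_[p])

noncomputable def sigma {p : ℕ} [Fact p.Prime] (x : ℚ_[p]) : ℚ_[p] :=
  eps x - (fdigit (eps x) : ℚ_[p])

/-- `f(x) = Σ_{n=0}^∞ ⌊1/ε(τⁿ x)⌋_p ∏_{m=0}^n τᵐ x / ε(τᵐ x)` -/
noncomputable def schneiderF {p : ℕ} [Fact p.Prime] (x : ℚ_[p]) : ℚ_[p] :=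
  ∑' n : ℕ, (fdigit (1 / eps (tau^[n] x)) : ℚ_[p]) *
    ∏ m ∈ Finset.range (n + 1), (tau^[m] x) / eps (tau^[m] x)

/-- Finite continued fraction `b 0 / (a 0 + b 1 / (a 1 + ⋯ + b n / (a n + x)))`. -/
noncomputable def cf {p : ℕ} [Fact p.Prime] : (ℕ → ℚ_[p]) → (ℕ → ℚ_[p]) → ℕ → ℚ_[p] → ℚ_[p]
  | a, b, 0, x => b 0 / (a 0 + x)
  | a, b, n + 1, x => b 0 / (a 0 + cf (fun i => a (i + 1)) (fun i => b (i + 1)) n x)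

/-!
Writing `y = (y / ε(y)) · (⌊ε(y)⌋_p + σ(y))` for `y = σⁿ(x)` shows that the `n`-th term of the
series is `Rₙ - Rₙ₊₁`, where `Rₙ = (∏_{m<n} σᵐ(x) / ε(σᵐ(x))) · σⁿ(x)` and `R₀ = x`.
Since `ε(y)` is a `p`-adic unit, `|σ(y)|_p ≤ 1/p` and `|y / ε(y)|_p = |y|_p`, so
`|Rₙ₊₁|_p ≤ |Rₙ|_p / p`: the remainders are summable and the series telescopes to `R₀ = x`.
-/

theorem tsum_sub_succ_eq {G : Type*} [AddCommGroup G] [TopologicalSpace G]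
    [IsTopologicalAddGroup G] [T2Space G] {f : ℕ → G} (hf : Summable f) :
    ∑' n, (f n - f (n + 1)) = f 0 := by
  rw [hf.tsum_sub ((summable_nat_add_iff 1).mpr hf), hf.tsum_eq_zero_add, add_sub_cancel_right]

section

variable {p : ℕ} [Fact p.Prime]

theorem norm_sub_fdigit_le {z : ℚ_[p]} (hz : ‖z‖ ≤ 1) : ‖z - fdigit z‖ ≤ (p : ℝ)⁻¹ := by
  set Z : ℤ_[p] := ⟨z, hz⟩
  have hlt : ‖Z - (PadicInt.toZMod Z).val‖ < 1 := by
    rw [ZMod.natCast_val, ← PadicInt.mem_nonunits, ← IsLocalRing.mem_maximalIdeal]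
    exact PadicInt.toZMod_spec Z
  have hle : ‖Z - (PadicInt.toZMod Z).val‖ ≤ (p : ℝ) ^ (-1 : ℤ) := by
    rwa [PadicInt.norm_le_pow_iff_norm_lt_pow_add_one, neg_add_cancel, zpow_zero]
  rw [fdigit, dif_pos hz, ← zpow_neg_one]
  simpa only [PadicInt.norm_def, PadicInt.coe_sub, PadicInt.coe_natCast] using hle

theorem eps_ne_zero (y : ℚ_[p]) : eps y ≠ 0 := by
  unfold eps
  split_ifs with hy
  · exact one_ne_zero
  · exact mul_ne_zero (zpow_ne_zero _ (Nat.cast_ne_zero.mpr (Fact.out : p.Prime).ne_zero)) hy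

theorem norm_eps {y : ℚ_[p]} (hy : y ≠ 0) : ‖eps y‖ = 1 := by
  have hp : (p : ℝ) ≠ 0 := Nat.cast_ne_zero.mpr (Fact.out : p.Prime).ne_zero
  rw [eps, if_neg hy, norm_mul, Padic.norm_p_zpow, Padic.norm_eq_zpow_neg_valuation hy, neg_neg,
    ← zpow_add₀ hp, add_neg_cancel, zpow_zero]

theorem norm_eps_le_one (y : ℚ_[p]) : ‖eps y‖ ≤ 1 := by
  by_cases hy : y = 0
  · simp [eps, hy]
  · exact (norm_eps hy).le

theorem norm_div_eps (y : ℚ_[p]) : ‖y / eps y‖ = ‖y‖ := by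
  by_cases hy : y = 0
  · simp [hy]
  · rw [norm_div, norm_eps hy, div_one]

theorem norm_sigma_le (y : ℚ_[p]) : ‖sigma y‖ ≤ (p : ℝ)⁻¹ :=
  norm_sub_fdigit_le (norm_eps_le_one y)

theorem div_eps_mul_fdigit_add_sigma (y : ℚ_[p]) :
    y / eps y * (fdigit (eps y) + sigma y) = y := by
  rw [sigma, add_sub_cancel, div_mul_cancel₀ y (eps_ne_zero y)]

noncomputable def sigmaRemainder (x : ℚ_[p]) (n : ℕ) : ℚ_[p] :=
  (∏ m ∈ Finset.range n, sigma^[m] x / eps (sigma^[m] x)) * sigma^[n] x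

theorem sigmaRemainder_zero (x : ℚ_[p]) : sigmaRemainder x 0 = x := by
  simp [sigmaRemainder]

theorem sigmaRemainder_sub_succ (x : ℚ_[p]) (n : ℕ) :
    sigmaRemainder x n - sigmaRemainder x (n + 1) = (fdigit (eps (sigma^[n] x)) : ℚ_[p]) *
      ∏ m ∈ Finset.range (n + 1), sigma^[m] x / eps (sigma^[m] x) := by
  conv_lhs => rw [sigmaRemainder, ← div_eps_mul_fdigit_add_sigma (sigma^[n] x)]
  rw [sigmaRemainder, Finset.prod_range_succ, Function.iterate_succ_apply']
  ring

theorem norm_sigmaRemainder_succ_le (x : ℚ_[p]) (n : ℕ) :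
    ‖sigmaRemainder x (n + 1)‖ ≤ (p : ℝ)⁻¹ * ‖sigmaRemainder x n‖ := by
  rw [sigmaRemainder, sigmaRemainder, Finset.prod_range_succ, Function.iterate_succ_apply',
    norm_mul, norm_mul, norm_mul, norm_div_eps, mul_comm (p : ℝ)⁻¹]
  exact mul_le_mul_of_nonneg_left (norm_sigma_le _) (by positivity)

theorem summable_sigmaRemainder (x : ℚ_[p]) : Summable (sigmaRemainder x) :=
  summable_of_ratio_norm_eventually_le
    (inv_lt_one_of_one_lt₀ (by exact_mod_cast (Fact.out : p.Prime).one_lt))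
    (Filter.Eventually.of_forall (norm_sigmaRemainder_succ_le x))

end

theorem shift_digit_expansion (p : ℕ) [Fact p.Prime] (x : ℚ_[p]) :
    x = ∑' n : ℕ, (fdigit (eps (sigma^[n] x)) : ℚ_[p]) *
      ∏ m ∈ Finset.range (n + 1), sigma^[m] x / eps (sigma^[m] x) := by
  simp_rw [← sigmaRemainder_sub_succ, tsum_sub_succ_eq (summable_sigmaRemainder x),
    sigmaRemainder_zero]
end

section
/- The map f: ℚ_p → ℚ_p defined from Schneider's continued fraction expansion is surjective, and hence a bijective isometry of ℚ_p. -/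
namespace Schneider

variable {p : ℕ} [hp : Fact p.Prime]

lemma one_lt_p : (1:ℝ) < p := by exact_mod_cast hp.out.one_lt
lemma p_pos : (0:ℝ) < p := lt_trans one_pos one_lt_p
lemma pinv_lt_one : (p:ℝ)⁻¹ < 1 := inv_lt_one_of_one_lt₀ one_lt_p
lemma pinv_nonneg : (0:ℝ) ≤ (p:ℝ)⁻¹ := inv_nonneg.2 p_pos.le
lemma pinv_le_one : (p:ℝ)⁻¹ ≤ 1 := pinv_lt_one.le

lemma eps_zero : eps (0:ℚ_[p]) = 1 := if_pos rfl

lemma eps_of_ne (x : ℚ_[p]) (hx : x ≠ 0) :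
    eps x = (p:ℚ_[p])^(-x.valuation) * x := if_neg hx

lemma norm_eps (x : ℚ_[p]) (hx : x ≠ 0) : ‖eps x‖ = 1 := by
  rw [eps_of_ne x hx, norm_mul, Padic.norm_p_zpow, Padic.norm_eq_zpow_neg_valuation hx, neg_neg,
    ← zpow_add₀ (ne_of_gt p_pos), add_neg_cancel, zpow_zero]

lemma eps_ne_zero (x : ℚ_[p]) : eps x ≠ 0 := by
  by_cases hx : x = 0
  · rw [hx, eps_zero]; exact one_ne_zero
  · intro h
    have := norm_eps x hx
    rw [h] at this
    simp at this

lemma norm_one_div_eps (x : ℚ_[p]) (hx : x ≠ 0) : ‖1 / eps x‖ = 1 := by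
  rw [norm_div, norm_one, norm_eps x hx, div_one]

lemma div_eps (x : ℚ_[p]) (hx : x ≠ 0) : x / eps x = (p:ℚ_[p])^(x.valuation) := by
  have hp0 : (p:ℚ_[p]) ≠ 0 := Nat.cast_ne_zero.mpr hp.out.ne_zero
  have hpz : (p:ℚ_[p]) ^ x.valuation ≠ 0 := zpow_ne_zero _ hp0
  rw [eps_of_ne x hx, zpow_neg, div_eq_iff (mul_ne_zero (inv_ne_zero hpz) hx),
    ← mul_assoc, mul_inv_cancel₀ hpz, one_mul]

lemma norm_div_eps (x : ℚ_[p]) : ‖x / eps x‖ = ‖x‖ := by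
  by_cases hx : x = 0
  · simp [hx]
  · rw [norm_div, norm_eps x hx, div_one]

lemma digit_add_tau (x : ℚ_[p]) : (fdigit (1/eps x) : ℚ_[p]) + tau x = 1 / eps x := by
  rw [tau]; ring

lemma eps_eq (x : ℚ_[p]) :
    eps x = ((fdigit (1/eps x) : ℚ_[p]) + tau x)⁻¹ := by
  rw [digit_add_tau, one_div, inv_inv]

end Schneider

namespace Schneider

variable {p : ℕ} [hp : Fact p.Prime]

lemma fdigit_eq (x : ℚ_[p]) (h : ‖x‖ ≤ 1) :
    fdigit x = (PadicInt.toZMod (⟨x, h⟩ : ℤ_[p])).val := dif_pos h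

lemma fdigit_lt (x : ℚ_[p]) : fdigit x < p := by
  haveI : NeZero p := ⟨hp.out.ne_zero⟩
  by_cases h : ‖x‖ ≤ 1
  · rw [fdigit_eq x h]; exact ZMod.val_lt _
  · rw [fdigit, dif_neg h]; exact hp.out.pos

lemma norm_sub_fdigit (x : ℚ_[p]) (h : ‖x‖ ≤ 1) :
    ‖x - (fdigit x : ℚ_[p])‖ ≤ (p:ℝ)⁻¹ := by
  haveI : NeZero p := ⟨hp.out.ne_zero⟩
  set z : ℤ_[p] := ⟨x, h⟩ with hz
  have hlt : ‖z - ((fdigit x : ℕ) : ℤ_[p])‖ < 1 := by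
    have hspec := PadicInt.toZMod_spec z
    rw [PadicInt.maximalIdeal_eq_span_p, Ideal.mem_span_singleton] at hspec
    rw [fdigit_eq x h, ZMod.natCast_val]
    exact (PadicInt.norm_lt_one_iff_dvd _).mpr hspec
  have hle : ‖z - ((fdigit x : ℕ) : ℤ_[p])‖ ≤ (p:ℝ)^(-1:ℤ) := by
    rw [PadicInt.norm_le_pow_iff_norm_lt_pow_add_one]
    simpa using hlt
  have hco : ((z - ((fdigit x : ℕ) : ℤ_[p]) : ℤ_[p]) : ℚ_[p]) = x - (fdigit x : ℚ_[p]) := by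
    push_cast [hz]
    rfl
  rw [← hco] at *
  rw [← PadicInt.norm_def]
  simpa using hle

lemma fdigit_ne_zero (x : ℚ_[p]) (h1 : ‖x‖ = 1) : fdigit x ≠ 0 := by
  haveI : NeZero p := ⟨hp.out.ne_zero⟩
  intro h0
  set z : ℤ_[p] := ⟨x, h1.le⟩ with hzdef
  rw [fdigit_eq x h1.le, ZMod.val_eq_zero] at h0
  have hker : z ∈ RingHom.ker (PadicInt.toZMod : ℤ_[p] →+* ZMod p) := h0
  rw [PadicInt.ker_toZMod, PadicInt.maximalIdeal_eq_span_p, Ideal.mem_span_singleton,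
    ← PadicInt.norm_lt_one_iff_dvd] at hker
  have hz1 : ‖z‖ = 1 := by rw [PadicInt.norm_def]; exact h1
  rw [hz1] at hker
  exact lt_irrefl _ hker

lemma norm_natCast_of (a : ℕ) (h0 : a ≠ 0) (hlt : a < p) : ‖(a:ℚ_[p])‖ = 1 := by
  have hc : ((a:ℤ):ℚ_[p]) = (a:ℚ_[p]) := by push_cast; ring
  refine le_antisymm (by rw [← hc]; exact Padic.norm_int_le_one _) ?_
  by_contra hcon
  rw [not_le] at hcon
  have hdvd : (p:ℤ) ∣ (a:ℤ) := by
    rw [← Padic.norm_intCast_lt_one_iff]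
    rwa [hc]
  have : p ∣ a := by exact_mod_cast hdvd
  have := Nat.le_of_dvd (Nat.pos_of_ne_zero h0) this
  omega

lemma norm_fdigit_le_one (x : ℚ_[p]) : ‖(fdigit x : ℚ_[p])‖ ≤ 1 := by
  have hc : (((fdigit x):ℤ):ℚ_[p]) = ((fdigit x):ℚ_[p]) := by push_cast; ring
  rw [← hc]; exact Padic.norm_int_le_one _

lemma fdigit_add_of (a : ℕ) (ha : a < p) (t : ℚ_[p]) (ht : ‖t‖ ≤ (p:ℝ)⁻¹) :
    fdigit ((a:ℚ_[p]) + t) = a := by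
  haveI : NeZero p := ⟨hp.out.ne_zero⟩
  have htle : ‖t‖ ≤ 1 := le_trans ht pinv_le_one
  have hna : ‖(a:ℚ_[p])‖ ≤ 1 := by
    have hc : ((a:ℤ):ℚ_[p]) = (a:ℚ_[p]) := by push_cast; ring
    rw [← hc]; exact Padic.norm_int_le_one _
  have habs : ‖(a:ℚ_[p]) + t‖ ≤ 1 :=
    le_trans (Padic.nonarchimedean _ _) (max_le hna htle)
  rw [fdigit_eq _ habs]
  set zt : ℤ_[p] := ⟨t, htle⟩ with hztdef
  have hzt : (⟨(a:ℚ_[p]) + t, habs⟩ : ℤ_[p]) = (a : ℤ_[p]) + zt := by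
    ext; push_cast [hztdef]; rfl
  have ht0 : PadicInt.toZMod zt = 0 := by
    have hmem : zt ∈ RingHom.ker (PadicInt.toZMod : ℤ_[p] →+* ZMod p) := by
      rw [PadicInt.ker_toZMod, PadicInt.maximalIdeal_eq_span_p, Ideal.mem_span_singleton,
        ← PadicInt.norm_lt_one_iff_dvd, PadicInt.norm_def]
      exact lt_of_le_of_lt ht pinv_lt_one
    exact hmem
  rw [hzt, map_add, map_natCast, ht0, add_zero, ZMod.val_natCast_of_lt ha]

lemma fdigit_one : fdigit (1:ℚ_[p]) = 1 := by
  have h := fdigit_add_of (p := p) 1 hp.out.one_lt 0 (by simpa using pinv_nonneg)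
  simpa using h

lemma tau_zero : tau (0:ℚ_[p]) = 0 := by
  rw [tau, eps_zero]
  norm_num [fdigit_one]

lemma norm_tau_le (x : ℚ_[p]) : ‖tau x‖ ≤ (p:ℝ)⁻¹ := by
  by_cases hx : x = 0
  · rw [hx, tau_zero]; simpa using pinv_nonneg
  · exact norm_sub_fdigit _ (le_of_eq (norm_one_div_eps x hx))

end Schneider

namespace Schneider

variable {p : ℕ} [hp : Fact p.Prime]

/-- The `n`-th term of the Schneider series. -/
noncomputable def trm (x : ℚ_[p]) (n : ℕ) : ℚ_[p] :=
  (fdigit (1 / eps (tau^[n] x)) : ℚ_[p]) *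
    ∏ m ∈ Finset.range (n + 1), (tau^[m] x) / eps (tau^[m] x)

lemma schneiderF_eq_tsum (x : ℚ_[p]) : schneiderF x = ∑' n, trm x n := rfl

lemma norm_trm_le (x : ℚ_[p]) (n : ℕ) : ‖trm x n‖ ≤ ‖x‖ * ((p:ℝ)⁻¹)^n := by
  rw [trm, norm_mul]
  have h1 : ‖(fdigit (1/eps (tau^[n] x)) : ℚ_[p])‖ ≤ 1 := norm_fdigit_le_one _
  have h2 : ‖∏ m ∈ Finset.range (n + 1), (tau^[m] x) / eps (tau^[m] x)‖
      ≤ ((p:ℝ)⁻¹)^n * ‖x‖ := by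
    rw [Finset.prod_range_succ', norm_mul]
    have hfac : ∀ i ∈ Finset.range n, ‖(tau^[i+1] x) / eps (tau^[i+1] x)‖ ≤ (p:ℝ)⁻¹ := by
      intro i _
      rw [norm_div_eps, Function.iterate_succ_apply']
      exact norm_tau_le _
    have hprod : ‖∏ i ∈ Finset.range n, (tau^[i+1] x) / eps (tau^[i+1] x)‖
        ≤ ((p:ℝ)⁻¹)^n := by
      rw [norm_prod]
      calc ∏ i ∈ Finset.range n, ‖(tau^[i+1] x) / eps (tau^[i+1] x)‖
          ≤ ∏ _i ∈ Finset.range n, (p:ℝ)⁻¹ :=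
            Finset.prod_le_prod (fun i _ => norm_nonneg _) hfac
        _ = ((p:ℝ)⁻¹)^n := by rw [Finset.prod_const, Finset.card_range]
    have h0 : ‖(tau^[0] x) / eps (tau^[0] x)‖ = ‖x‖ := by
      simp only [Function.iterate_zero_apply]
      exact norm_div_eps x
    rw [h0]
    exact mul_le_mul_of_nonneg_right hprod (norm_nonneg _)
  calc ‖(fdigit (1/eps (tau^[n] x)) : ℚ_[p])‖ *
        ‖∏ m ∈ Finset.range (n + 1), (tau^[m] x) / eps (tau^[m] x)‖
      ≤ 1 * (((p:ℝ)⁻¹)^n * ‖x‖) :=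
        mul_le_mul h1 h2 (norm_nonneg _) one_pos.le
    _ = ‖x‖ * ((p:ℝ)⁻¹)^n := by ring

lemma summable_trm (x : ℚ_[p]) : Summable (trm x) :=
  Summable.of_norm_bounded
    ((summable_geometric_of_lt_one pinv_nonneg pinv_lt_one).mul_left ‖x‖) (norm_trm_le x)

lemma F_zero : schneiderF (0:ℚ_[p]) = 0 := by
  rw [schneiderF_eq_tsum]
  have h : ∀ n, trm (0:ℚ_[p]) n = 0 := by
    intro n
    rw [trm]
    have hz : ∏ m ∈ Finset.range (n + 1), (tau^[m] (0:ℚ_[p])) / eps (tau^[m] (0:ℚ_[p])) = 0 := by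
      apply Finset.prod_eq_zero (Finset.mem_range.mpr n.succ_pos)
      simp
    rw [hz, mul_zero]
  simp only [h, tsum_zero]

lemma trm_succ (x : ℚ_[p]) (n : ℕ) : trm x (n+1) = (x / eps x) * trm (tau x) n := by
  rw [trm, trm, Finset.prod_range_succ']
  simp only [Function.iterate_succ_apply, Function.iterate_zero_apply]
  ring

lemma F_rec (x : ℚ_[p]) :
    schneiderF x = (x / eps x) * ((fdigit (1 / eps x) : ℚ_[p]) + schneiderF (tau x)) := by
  rw [schneiderF_eq_tsum, (summable_trm x).tsum_eq_zero_add]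
  have h0 : trm x 0 = (fdigit (1/eps x) : ℚ_[p]) * (x / eps x) := by
    rw [trm]
    simp
  have h1 : ∑' n, trm x (n+1) = (x / eps x) * schneiderF (tau x) := by
    rw [schneiderF_eq_tsum, ← tsum_mul_left]
    exact tsum_congr fun n => trm_succ x n
  rw [h0, h1]
  ring

lemma norm_F_le (x : ℚ_[p]) : ‖schneiderF x‖ ≤ ‖x‖ := by
  rw [schneiderF_eq_tsum]
  refine IsUltrametricDist.norm_tsum_le_of_forall_le_of_nonneg (norm_nonneg x) fun n => ?_
  exact (norm_trm_le x n).trans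
    (mul_le_of_le_one_right (norm_nonneg x) (pow_le_one₀ pinv_nonneg pinv_le_one))

lemma norm_add_of_lt {a b : ℚ_[p]} (h : ‖b‖ < ‖a‖) : ‖a + b‖ = ‖a‖ := by
  rw [Padic.add_eq_max_of_ne h.ne', max_eq_left h.le]

lemma norm_digit_add_F_tau (x : ℚ_[p]) (hx : x ≠ 0) :
    ‖(fdigit (1/eps x) : ℚ_[p]) + schneiderF (tau x)‖ = 1 := by
  have hd : ‖(fdigit (1/eps x):ℚ_[p])‖ = 1 :=
    norm_natCast_of _ (fdigit_ne_zero _ (norm_one_div_eps x hx)) (fdigit_lt _)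
  have hT : ‖schneiderF (tau x)‖ < 1 :=
    lt_of_le_of_lt ((norm_F_le _).trans (norm_tau_le x)) pinv_lt_one
  rw [norm_add_of_lt (by rw [hd]; exact hT), hd]

lemma norm_F (x : ℚ_[p]) : ‖schneiderF x‖ = ‖x‖ := by
  by_cases hx : x = 0
  · simp [hx, F_zero]
  · rw [F_rec x, norm_mul, norm_digit_add_F_tau x hx, mul_one, norm_div_eps]

end Schneider

namespace Schneider

variable {p : ℕ} [hp : Fact p.Prime]

lemma norm_sub_le_max' (a b : ℚ_[p]) : ‖a - b‖ ≤ max ‖a‖ ‖b‖ := by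
  rw [sub_eq_add_neg]
  refine (Padic.nonarchimedean _ _).trans ?_
  rw [norm_neg]

lemma norm_sub_eq_max' {a b : ℚ_[p]} (h : ‖a‖ ≠ ‖b‖) : ‖a - b‖ = max ‖a‖ ‖b‖ := by
  rw [sub_eq_add_neg, Padic.add_eq_max_of_ne (by rwa [norm_neg]), norm_neg]

lemma x_eq (x : ℚ_[p]) (hx : x ≠ 0) :
    x = (p:ℚ_[p])^(x.valuation) * ((fdigit (1/eps x):ℚ_[p]) + tau x)⁻¹ := by
  conv_lhs => rw [← div_mul_cancel₀ x (eps_ne_zero x), div_eps x hx, eps_eq]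

lemma B_ne_zero (x : ℚ_[p]) : ((fdigit (1/eps x):ℚ_[p]) + tau x) ≠ 0 := by
  rw [digit_add_tau]
  exact one_div_ne_zero (eps_ne_zero x)

lemma norm_p_val (x : ℚ_[p]) (hx : x ≠ 0) : ‖(p:ℚ_[p])^(x.valuation)‖ = ‖x‖ := by
  rw [Padic.norm_p_zpow, ← Padic.norm_eq_zpow_neg_valuation hx]

lemma val_eq_of_norm_eq {x y : ℚ_[p]} (hx : x ≠ 0) (hy : y ≠ 0) (h : ‖x‖ = ‖y‖) :
    x.valuation = y.valuation := by
  rw [Padic.norm_eq_zpow_neg_valuation hx, Padic.norm_eq_zpow_neg_valuation hy] at h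
  have := zpow_right_injective₀ p_pos one_lt_p.ne' h
  exact neg_inj.mp this

lemma sub_eq (x y : ℚ_[p]) (hx : x ≠ 0) (hy : y ≠ 0) (hv : x.valuation = y.valuation) :
    x - y = (p:ℚ_[p])^(x.valuation) *
      (((((fdigit (1/eps y):ℚ_[p]) + tau y) - ((fdigit (1/eps x):ℚ_[p]) + tau x))) *
        ((((fdigit (1/eps x):ℚ_[p]) + tau x)⁻¹ * (((fdigit (1/eps y):ℚ_[p]) + tau y)⁻¹)))) := by
  have hBx := B_ne_zero x
  have hBy := B_ne_zero y
  conv_lhs => rw [x_eq x hx, x_eq y hy, ← hv]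
  field_simp

lemma norm_B_inv (x : ℚ_[p]) (hx : x ≠ 0) : ‖((fdigit (1/eps x):ℚ_[p]) + tau x)⁻¹‖ = 1 := by
  rw [norm_inv, digit_add_tau, norm_one_div_eps x hx, inv_one]

lemma norm_sub_main (x y : ℚ_[p]) (hx : x ≠ 0) (hy : y ≠ 0) (h : ‖x‖ = ‖y‖) :
    ‖x - y‖ = ‖x‖ *
      ‖((fdigit (1/eps x):ℚ_[p]) - (fdigit (1/eps y):ℚ_[p])) + (tau x - tau y)‖ := by
  have hv := val_eq_of_norm_eq hx hy h
  rw [sub_eq x y hx hy hv, norm_mul, norm_p_val x hx, norm_mul, norm_mul,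
    norm_B_inv x hx, norm_B_inv y hy]
  have hrw : (((fdigit (1/eps y):ℚ_[p]) + tau y) - ((fdigit (1/eps x):ℚ_[p]) + tau x))
      = -(((fdigit (1/eps x):ℚ_[p]) - (fdigit (1/eps y):ℚ_[p])) + (tau x - tau y)) := by ring
  rw [hrw, norm_neg]
  ring

lemma F_sub (x y : ℚ_[p]) (hx : x ≠ 0) (hy : y ≠ 0) (hv : x.valuation = y.valuation) :
    schneiderF x - schneiderF y = (p:ℚ_[p])^(x.valuation) *
      (((fdigit (1/eps x):ℚ_[p]) - (fdigit (1/eps y):ℚ_[p]))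
        + (schneiderF (tau x) - schneiderF (tau y))) := by
  rw [F_rec x, F_rec y, div_eps x hx, div_eps y hy, ← hv]
  ring

lemma norm_F_sub_main (x y : ℚ_[p]) (hx : x ≠ 0) (hy : y ≠ 0) (h : ‖x‖ = ‖y‖) :
    ‖schneiderF x - schneiderF y‖ = ‖x‖ *
      ‖((fdigit (1/eps x):ℚ_[p]) - (fdigit (1/eps y):ℚ_[p]))
        + (schneiderF (tau x) - schneiderF (tau y))‖ := by
  rw [F_sub x y hx hy (val_eq_of_norm_eq hx hy h), norm_mul, norm_p_val x hx]

lemma norm_digit_sub (a b : ℕ) (ha : a < p) (hb : b < p) (hne : a ≠ b) :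
    ‖((a:ℚ_[p]) - (b:ℚ_[p]))‖ = 1 := by
  have hc : ((a:ℚ_[p]) - (b:ℚ_[p])) = (((a:ℤ) - (b:ℤ) : ℤ) : ℚ_[p]) := by push_cast; ring
  rw [hc]
  refine le_antisymm (Padic.norm_int_le_one _) ?_
  by_contra hcon
  rw [not_le] at hcon
  have hdvd := Padic.norm_intCast_lt_one_iff.mp hcon
  have hz : ((a:ℤ) - (b:ℤ)) = 0 := by
    apply Int.eq_zero_of_dvd_of_natAbs_lt_natAbs hdvd
    omega
  omega

lemma norm_tau_sub_lt_one (u v : ℚ_[p]) : ‖tau u - tau v‖ < 1 :=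
  lt_of_le_of_lt ((norm_sub_le_max' _ _).trans (max_le (norm_tau_le u) (norm_tau_le v)))
    pinv_lt_one

lemma norm_F_tau_sub_lt_one (u v : ℚ_[p]) : ‖schneiderF (tau u) - schneiderF (tau v)‖ < 1 := by
  refine lt_of_le_of_lt ((norm_sub_le_max' _ _).trans (max_le ?_ ?_)) (pinv_lt_one (p := p))
  · exact (norm_F_le _).trans (norm_tau_le u)
  · exact (norm_F_le _).trans (norm_tau_le v)

/-- The easy cases of the isometry property. -/
lemma iso_cases (u v : ℚ_[p])
    (hrec : u ≠ 0 → v ≠ 0 → ‖u‖ = ‖v‖ → fdigit (1/eps u) = fdigit (1/eps v) →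
      ‖schneiderF (tau u) - schneiderF (tau v)‖ = ‖tau u - tau v‖) :
    ‖schneiderF u - schneiderF v‖ = ‖u - v‖ := by
  by_cases hu0 : u = 0
  · subst hu0
    simp [F_zero, norm_F]
  by_cases hv0 : v = 0
  · subst hv0
    simp [F_zero, norm_F]
  by_cases hnorm : ‖u‖ = ‖v‖
  · by_cases hd : fdigit (1/eps u) = fdigit (1/eps v)
    · rw [norm_sub_main u v hu0 hv0 hnorm, norm_F_sub_main u v hu0 hv0 hnorm, hd, sub_self,
        zero_add, zero_add, hrec hu0 hv0 hnorm hd]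
    · have hdu : ‖(fdigit (1/eps u):ℚ_[p]) - (fdigit (1/eps v):ℚ_[p])‖ = 1 :=
        norm_digit_sub _ _ (fdigit_lt _) (fdigit_lt _) hd
      rw [norm_sub_main u v hu0 hv0 hnorm, norm_F_sub_main u v hu0 hv0 hnorm,
        norm_add_of_lt (by rw [hdu]; exact norm_F_tau_sub_lt_one u v),
        norm_add_of_lt (by rw [hdu]; exact norm_tau_sub_lt_one u v)]
  · rw [norm_sub_eq_max' (by rw [norm_F, norm_F]; exact hnorm), norm_F, norm_F,
      ← norm_sub_eq_max' hnorm]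

lemma iso_aux : ∀ k : ℕ, ∀ u v : ℚ_[p], ‖u‖ ≤ (p:ℝ)⁻¹ → ‖v‖ ≤ (p:ℝ)⁻¹ →
    ((p:ℝ)⁻¹)^k ≤ ‖u - v‖ → ‖schneiderF u - schneiderF v‖ = ‖u - v‖ := by
  intro k
  induction k with
  | zero =>
    intro u v hu hv hk
    exfalso
    have hle : ‖u - v‖ ≤ (p:ℝ)⁻¹ := (norm_sub_le_max' _ _).trans (max_le hu hv)
    rw [pow_zero] at hk
    linarith [pinv_lt_one (p := p)]
  | succ k ih =>
    intro u v hu hv hk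
    refine iso_cases u v ?_
    intro hu0 hv0 hnorm hd
    have h1 : ‖u - v‖ = ‖u‖ * ‖tau u - tau v‖ := by
      rw [norm_sub_main u v hu0 hv0 hnorm, hd, sub_self, zero_add]
    have hk' : ((p:ℝ)⁻¹)^k ≤ ‖tau u - tau v‖ := by
      have h2 : ((p:ℝ)⁻¹)^(k+1) ≤ ‖u‖ * ‖tau u - tau v‖ := h1 ▸ hk
      have h3 : ‖u‖ * ‖tau u - tau v‖ ≤ (p:ℝ)⁻¹ * ‖tau u - tau v‖ :=
        mul_le_mul_of_nonneg_right hu (norm_nonneg _)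
      have h4 : (p:ℝ)⁻¹ * ((p:ℝ)⁻¹)^k ≤ (p:ℝ)⁻¹ * ‖tau u - tau v‖ := by
        calc (p:ℝ)⁻¹ * ((p:ℝ)⁻¹)^k = ((p:ℝ)⁻¹)^(k+1) := by ring
          _ ≤ ‖u‖ * ‖tau u - tau v‖ := h2
          _ ≤ (p:ℝ)⁻¹ * ‖tau u - tau v‖ := h3
      exact le_of_mul_le_mul_left h4 (inv_pos.mpr p_pos)
    exact ih (tau u) (tau v) (norm_tau_le u) (norm_tau_le v) hk'

lemma isometry_F : ∀ x y : ℚ_[p], ‖schneiderF x - schneiderF y‖ = ‖x - y‖ := by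
  intro x y
  refine iso_cases x y ?_
  intro hx0 hy0 hnorm hd
  by_cases htt : tau x = tau y
  · rw [htt]
    simp
  · have hpos : 0 < ‖tau x - tau y‖ := by
      rw [norm_pos_iff]
      exact sub_ne_zero_of_ne htt
    obtain ⟨k, hk⟩ := exists_pow_lt_of_lt_one hpos (pinv_lt_one (p := p))
    exact iso_aux k (tau x) (tau y) (norm_tau_le x) (norm_tau_le y) hk.le

end Schneider

namespace Schneider

variable {p : ℕ} [hp : Fact p.Prime]

lemma approx : ∀ n : ℕ, ∀ y : ℚ_[p], y ≠ 0 →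
    ∃ x : ℚ_[p], ‖x‖ = ‖y‖ ∧ ‖schneiderF x - y‖ ≤ ‖y‖ * ((p:ℝ)⁻¹)^n := by
  intro n
  induction n with
  | zero =>
    intro y hy
    refine ⟨y, rfl, ?_⟩
    rw [pow_zero, mul_one]
    refine (norm_sub_le_max' _ _).trans ?_
    rw [norm_F]
    exact max_le le_rfl le_rfl
  | succ n ih =>
    intro y hy
    have hepsy : ‖eps y‖ = 1 := norm_eps y hy
    set a : ℕ := fdigit (eps y) with ha_def
    set r : ℚ_[p] := eps y - (a:ℚ_[p]) with hr_def
    have ha_lt : a < p := fdigit_lt _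
    have ha0 : a ≠ 0 := fdigit_ne_zero _ hepsy
    have hr : ‖r‖ ≤ (p:ℝ)⁻¹ := norm_sub_fdigit _ hepsy.le
    obtain ⟨t, ht_norm_le, ht⟩ : ∃ t : ℚ_[p], ‖t‖ ≤ (p:ℝ)⁻¹ ∧
        ‖schneiderF t - r‖ ≤ (p:ℝ)⁻¹ * ((p:ℝ)⁻¹)^n := by
      by_cases hr0 : r = 0
      · refine ⟨0, by simpa using pinv_nonneg, ?_⟩
        rw [F_zero, hr0, sub_zero, norm_zero]
        positivity
      · obtain ⟨t, h1, h2⟩ := ih r hr0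
        exact ⟨t, h1.le.trans hr,
          h2.trans (mul_le_mul_of_nonneg_right hr (pow_nonneg pinv_nonneg n))⟩
    set A : ℚ_[p] := (a:ℚ_[p]) + t with hA_def
    have hna : ‖(a:ℚ_[p])‖ = 1 := norm_natCast_of a ha0 ha_lt
    have hA_norm : ‖A‖ = 1 := by
      rw [hA_def, norm_add_of_lt (by rw [hna]; exact lt_of_le_of_lt ht_norm_le pinv_lt_one), hna]
    have hA0 : A ≠ 0 := by
      intro h
      rw [h, norm_zero] at hA_norm
      exact one_ne_zero hA_norm.symm
    set P : ℚ_[p] := (p:ℚ_[p])^(y.valuation) with hP_def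
    have hpz : P ≠ 0 := zpow_ne_zero _ (Nat.cast_ne_zero.mpr hp.out.ne_zero)
    set x : ℚ_[p] := P * A⁻¹ with hx_def
    have hx0 : x ≠ 0 := mul_ne_zero hpz (inv_ne_zero hA0)
    have hPnorm : ‖P‖ = ‖y‖ := by
      rw [hP_def, Padic.norm_p_zpow, ← Padic.norm_eq_zpow_neg_valuation hy]
    have hxnorm : ‖x‖ = ‖y‖ := by
      rw [hx_def, norm_mul, norm_inv, hA_norm, inv_one, mul_one, hPnorm]
    have hxval : x.valuation = y.valuation := by
      have h1 : ‖x‖ = (p:ℝ)^(-y.valuation) := by rw [hxnorm, Padic.norm_eq_zpow_neg_valuation hy]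
      have h2 : ‖x‖ = (p:ℝ)^(-x.valuation) := Padic.norm_eq_zpow_neg_valuation hx0
      exact neg_inj.mp (zpow_right_injective₀ p_pos one_lt_p.ne' (h2.symm.trans h1))
    have heps : eps x = A⁻¹ := by
      rw [eps_of_ne x hx0, hxval, hx_def, hP_def, ← mul_assoc,
        ← zpow_add₀ (Nat.cast_ne_zero.mpr hp.out.ne_zero : (p:ℚ_[p]) ≠ 0), neg_add_cancel,
        zpow_zero, one_mul]
    have hone_div : 1 / eps x = A := by rw [heps, one_div, inv_inv]
    have hd : fdigit (1/eps x) = a := by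
      rw [hone_div, hA_def]
      exact fdigit_add_of a ha_lt t ht_norm_le
    have htau : tau x = t := by
      rw [tau, hd, hone_div, hA_def]
      ring
    have hdiv : x / eps x = P := by rw [div_eps x hx0, hxval, hP_def]
    have hF : schneiderF x = P * ((a:ℚ_[p]) + schneiderF t) := by
      rw [F_rec x, hdiv, hd, htau]
    have hy_eq : y = P * eps y := by
      conv_lhs => rw [← div_mul_cancel₀ y (eps_ne_zero y), div_eps y hy]
    refine ⟨x, hxnorm, ?_⟩
    have key : schneiderF x - y = P * (schneiderF t - r) := by
      rw [hF]
      conv_lhs => rw [hy_eq]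
      rw [hr_def]
      ring
    rw [key, norm_mul, hPnorm]
    calc ‖y‖ * ‖schneiderF t - r‖ ≤ ‖y‖ * ((p:ℝ)⁻¹ * ((p:ℝ)⁻¹)^n) :=
          mul_le_mul_of_nonneg_left ht (norm_nonneg y)
      _ = ‖y‖ * ((p:ℝ)⁻¹)^(n+1) := by ring

lemma surjective_F : Function.Surjective (schneiderF (p := p)) := by
  intro y
  by_cases hy : y = 0
  · exact ⟨0, by rw [F_zero, hy]⟩
  choose x hx1 hx2 using fun n => approx n y hy
  have hiso : Isometry (schneiderF (p := p)) :=
    Isometry.of_dist_eq fun a b => by rw [dist_eq_norm, dist_eq_norm, isometry_F]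
  have htend : Filter.Tendsto (fun n => schneiderF (x n)) Filter.atTop (nhds y) := by
    rw [tendsto_iff_dist_tendsto_zero]
    refine squeeze_zero (g := fun n => ‖y‖ * ((p:ℝ)⁻¹)^n) (fun n => dist_nonneg) (fun n => ?_) ?_
    · rw [dist_eq_norm]
      exact hx2 n
    · have := (tendsto_pow_atTop_nhds_zero_of_lt_one pinv_nonneg (pinv_lt_one (p := p))).const_mul ‖y‖
      simpa using this
  have hcauchy : CauchySeq (fun n => schneiderF (x n)) := htend.cauchySeq
  have hcx : CauchySeq x := by
    rw [Metric.cauchySeq_iff] at hcauchy ⊢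
    intro ε hε
    obtain ⟨N, hN⟩ := hcauchy ε hε
    refine ⟨N, fun m hm n hn => ?_⟩
    have := hN m hm n hn
    rwa [dist_eq_norm, isometry_F, ← dist_eq_norm] at this
  obtain ⟨L, hL⟩ := cauchySeq_tendsto_of_complete hcx
  refine ⟨L, ?_⟩
  have hFL : Filter.Tendsto (fun n => schneiderF (x n)) Filter.atTop (nhds (schneiderF L)) :=
    (hiso.continuous.tendsto L).comp hL
  exact tendsto_nhds_unique hFL htend

lemma injective_F : Function.Injective (schneiderF (p := p)) := by
  intro a b h
  have h2 : ‖a - b‖ = 0 := by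
    rw [← isometry_F a b, h, sub_self, norm_zero]
  rw [norm_eq_zero] at h2
  exact sub_eq_zero.mp h2

end Schneider

theorem schneiderF_surjective_bijective_isometry (p : ℕ) [Fact p.Prime] :
    Function.Surjective (schneiderF (p := p)) ∧
    Function.Bijective (schneiderF (p := p)) ∧
    (∀ x y : ℚ_[p], ‖schneiderF x - schneiderF y‖ = ‖x - y‖) := by
  exact ⟨Schneider.surjective_F, ⟨Schneider.injective_F, Schneider.surjective_F⟩,
    Schneider.isometry_F⟩
end
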